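/- Let β₁, β₂ > 0 be real numbers satisfying ν₀(β₁ + β₂ν₁) ≥ sinh 1, where ν₀ = √(1 − sin²1) and ν₁ = −sin 2/(1 + cos 2). Let p be analytic on the open unit disk 𝔻 with p(0) = 1, and suppose that for every z ∈ 𝔻 the value 1 + β₁·z·p′(z) + β₂·z²·p″(z) lies in the set {1 + sin w : w ∈ 𝔻}. Then for every z ∈ 𝔻, p(z) ∈ {1 + sin w : w ∈ 𝔻}, i.e. p(z) ≺ 1 + sin z. -/

import Mathlib

/-! With `γ = β₁ / β₂`, the function `β₁ z p' + β₂ z² p''` equals `β₂ z (γ p' + z p'')`. Since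
`‖sin w‖ ≤ sinh ‖w‖`, it maps the disk into the disk of radius `sinh 1`, so Schwarz's lemma gives
`‖γ p' + z p''‖ ≤ sinh 1 / β₂`. The radial derivative of `t ↦ t ^ γ p'(t z)` is
`t ^ (γ - 1) (γ p' + z p'')(t z)`, and comparing with `t ↦ sinh 1 t ^ γ / (γ β₂)` gives
`‖p'‖ ≤ sinh 1 / β₁`, hence `‖p z - 1‖ < sinh 1 / β₁ < cos 1` by the mean value inequality.
Finally, `sin w = ζ` for `w = -i log (i ζ + √(1 - ζ²))`, and the mean value inequality applied to
this branch of `arcsin` gives `‖w‖ ≤ ‖ζ‖ / √(1 - ‖ζ‖²) < 1` as soon as `‖ζ‖² < 1 / 2`, which holds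
for `ζ = p z - 1` because `cos² 1 < 1 / 2`. -/

open Metric

noncomputable def nu0 : ℝ := Real.sqrt (1 - Real.sin 1 ^ 2)

noncomputable def nu1 : ℝ := -Real.sin 2 / (1 + Real.cos 2)

open Set Complex

theorem Complex.norm_sin_le_sinh_norm (z : ℂ) : ‖sin z‖ ≤ Real.sinh ‖z‖ :=
  (hasSum_sin z).norm_le_of_bounded (Real.hasSum_sinh ‖z‖) fun n => by
    simp [norm_pow]

theorem nu0_eq_cos_one : nu0 = Real.cos 1 := by
  rw [nu0, ← Real.cos_eq_sqrt_one_sub_sin_sq] <;> linarith [Real.pi_gt_three]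

theorem nu1_eq_neg_tan_one : nu1 = -Real.tan 1 := by
  have hcos : Real.cos 1 ≠ 0 := Real.cos_one_pos.ne'
  rw [nu1, show (2 : ℝ) = 2 * 1 by norm_num, Real.sin_two_mul, Real.cos_two_mul,
    Real.tan_eq_sin_div_cos]
  field_simp
  ring

theorem cos_one_lt_sin_one : Real.cos 1 < Real.sin 1 := by
  rw [← Real.cos_pi_div_two_sub]
  exact Real.cos_lt_cos_of_nonneg_of_le_pi (by linarith [Real.pi_gt_three])
    (by linarith [Real.pi_gt_three]) (by linarith [Real.pi_lt_d2])

theorem sinh_one_add_sin_one_mul_le_cos_one_mul {β₁ β₂ : ℝ}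
    (h : nu0 * (β₁ + β₂ * nu1) ≥ Real.sinh 1) :
    Real.sinh 1 + Real.sin 1 * β₂ ≤ Real.cos 1 * β₁ := by
  rw [nu0_eq_cos_one, nu1_eq_neg_tan_one] at h
  linear_combination h - β₂ * Real.tan_mul_cos Real.cos_one_pos.ne'

theorem lt_of_sinh_one_add_sin_one_mul_le {β₁ β₂ : ℝ} (hβ₂ : 0 < β₂)
    (h : Real.sinh 1 + Real.sin 1 * β₂ ≤ Real.cos 1 * β₁) : β₂ < β₁ := by
  nlinarith [Real.cos_one_pos, Real.sinh_pos_iff.2 one_pos,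
    mul_lt_mul_of_pos_right cos_one_lt_sin_one hβ₂]

theorem sinh_one_lt_cos_one_mul {β₁ β₂ : ℝ} (hβ₂ : 0 < β₂)
    (h : Real.sinh 1 + Real.sin 1 * β₂ ≤ Real.cos 1 * β₁) : Real.sinh 1 < Real.cos 1 * β₁ := by
  linarith [mul_pos (Real.cos_one_pos.trans cos_one_lt_sin_one) hβ₂]

theorem sqrt_one_sub_norm_sq_le_re_cpow_inv_two (z : ℂ) :
    √(1 - ‖z‖ ^ 2) ≤ ((1 - z ^ 2) ^ (2⁻¹ : ℂ)).re := by
  rw [cpow_inv_two_re]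
  apply Real.sqrt_le_sqrt
  have h1 : (z ^ 2).re ≤ ‖z‖ ^ 2 := (re_le_norm _).trans (norm_pow z 2).le
  have h2 : (1 - z ^ 2).re ≤ ‖1 - z ^ 2‖ := re_le_norm _
  simp only [sub_re, one_re] at h2 ⊢
  linarith

noncomputable def complexArcsin (z : ℂ) : ℂ := -I * log (I * z + (1 - z ^ 2) ^ (2⁻¹ : ℂ))

theorem complexArcsin_zero : complexArcsin 0 = 0 := by simp [complexArcsin]

theorem sin_complexArcsin (z : ℂ) : sin (complexArcsin z) = z := by
  set S := (1 - z ^ 2) ^ (2⁻¹ : ℂ)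
  set L := log (I * z + S)
  have hS : S ^ 2 = 1 - z ^ 2 := cpow_ofNat_inv_pow _ 2
  have hmul : (S - I * z) * (I * z + S) = 1 := by linear_combination hS - z ^ 2 * I_sq
  have hexp : exp L = I * z + S := exp_log (right_ne_zero_of_mul_eq_one hmul)
  have hexp_neg : exp (-L) = S - I * z := by
    rw [exp_neg, hexp]; exact inv_eq_of_mul_eq_one_left hmul
  rw [sin, complexArcsin, show -(-I * L) * I = -L by linear_combination L * I_sq,
    show -I * L * I = L by linear_combination -L * I_sq, hexp, hexp_neg]
  linear_combination -z * I_sq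

theorem hasDerivAt_complexArcsin {z : ℂ} (hz : ‖z‖ ^ 2 < 1 / 2) :
    HasDerivAt complexArcsin ((1 - z ^ 2) ^ (2⁻¹ : ℂ))⁻¹ z := by
  set S := (1 - z ^ 2) ^ (2⁻¹ : ℂ) with hSdef
  have hSre : √(1 - ‖z‖ ^ 2) ≤ S.re := sqrt_one_sub_norm_sq_le_re_cpow_inv_two z
  have hz_lt : ‖z‖ < √(1 - ‖z‖ ^ 2) := (Real.lt_sqrt (norm_nonneg z)).2 (by linarith)
  have hbase : 1 - z ^ 2 ∈ slitPlane := by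
    have : (z ^ 2).re ≤ ‖z‖ ^ 2 := (re_le_norm _).trans (norm_pow z 2).le
    exact Or.inl (by simp only [sub_re, one_re]; linarith)
  have hU : I * z + S ∈ slitPlane := by
    have : z.im ≤ ‖z‖ := (le_abs_self _).trans (abs_im_le_norm z)
    exact Or.inl (by simp only [add_re, mul_re, I_re, I_im, zero_mul, one_mul]; linarith)
  have hS0 : S ≠ 0 := fun h => by
    rw [h, zero_re] at hSre; linarith [norm_nonneg z]
  have hderiv := ((((hasDerivAt_id z).const_mul I).add
    ((hasDerivAt_pow 2 z).const_sub 1 |>.cpow_const (c := 2⁻¹) hbase)).clog hU).const_mul (-I)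
  refine hderiv.congr_deriv ?_
  simp only [Pi.add_apply, id, mul_one, Nat.cast_ofNat, Nat.add_one_sub_one, pow_one]
  rw [show (2⁻¹ : ℂ) - 1 = -2⁻¹ by norm_num, cpow_neg, ← hSdef]
  field_simp [slitPlane_ne_zero hU]
  linear_combination (-S) * I_sq

theorem exists_mem_ball_sin_eq {ζ : ℂ} (hζ : ‖ζ‖ ^ 2 < 1 / 2) :
    ∃ w ∈ ball (0 : ℂ) 1, sin w = ζ := by
  refine ⟨complexArcsin ζ, ?_, sin_complexArcsin ζ⟩
  set ρ := ‖ζ‖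
  have hsq_of_mem {v : ℂ} (hv : v ∈ closedBall 0 ρ) : ‖v‖ ^ 2 ≤ ρ ^ 2 :=
    pow_le_pow_left₀ (norm_nonneg v) (mem_closedBall_zero_iff.1 hv) 2
  have hρ : 0 < √(1 - ρ ^ 2) := Real.sqrt_pos.2 (by linarith)
  have hderiv_le : ∀ v ∈ closedBall (0 : ℂ) ρ,
      ‖((1 - v ^ 2) ^ (2⁻¹ : ℂ))⁻¹‖ ≤ (√(1 - ρ ^ 2))⁻¹ := fun v hv => by
    rw [norm_inv]
    refine inv_anti₀ hρ ?_
    calc √(1 - ρ ^ 2) ≤ √(1 - ‖v‖ ^ 2) := Real.sqrt_le_sqrt (by linarith [hsq_of_mem hv])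
      _ ≤ ((1 - v ^ 2) ^ (2⁻¹ : ℂ)).re := sqrt_one_sub_norm_sq_le_re_cpow_inv_two v
      _ ≤ _ := re_le_norm _
  have hlip := (convex_closedBall (0 : ℂ) ρ).norm_image_sub_le_of_norm_hasDerivWithin_le
    (fun v hv => (hasDerivAt_complexArcsin (by linarith [hsq_of_mem hv])).hasDerivWithinAt)
    hderiv_le (mem_closedBall_self (norm_nonneg ζ)) (mem_closedBall_zero_iff.2 le_rfl)
  rw [complexArcsin_zero, sub_zero, sub_zero] at hlip
  have hρ_lt : ρ < √(1 - ρ ^ 2) := (Real.lt_sqrt (norm_nonneg ζ)).2 (by linarith)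
  rw [mem_ball_zero_iff]
  calc ‖complexArcsin ζ‖ ≤ (√(1 - ρ ^ 2))⁻¹ * ρ := hlip
    _ < 1 := by rw [inv_mul_lt_one₀ hρ]; exact hρ_lt

theorem norm_le_div_of_forall_norm_mul_le {G : ℂ → ℂ} {r R : ℝ}
    (hG : DifferentiableOn ℂ G (ball 0 r)) (h : ∀ z ∈ ball (0 : ℂ) r, ‖z * G z‖ ≤ R)
    {z : ℂ} (hz : z ∈ ball 0 r) : ‖G z‖ ≤ R / r := by
  set g : ℂ → ℂ := fun w => (w - 0) • G w
  have hg : DifferentiableOn ℂ g (ball 0 r) := (differentiableOn_id.sub_const 0).smul hG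
  have hmaps : MapsTo g (ball 0 r) (closedBall (g 0) R) := fun w hw => by
    simpa [g] using h w hw
  have hdslope : dslope g 0 z = G z := by
    rcases eq_or_ne z 0 with rfl | hz0
    · rw [dslope_same]
      have := ((hasDerivAt_id (0 : ℂ)).sub_const 0).smul
        (hG.differentiableAt (isOpen_ball.mem_nhds hz)).hasDerivAt
      exact this.deriv.trans (by simp)
    · exact dslope_sub_smul_of_ne G hz0
  rw [← hdslope]
  exact norm_dslope_le_div_of_mapsTo_ball hg hmaps hz

theorem norm_le_div_of_norm_mul_add_mul_deriv_le {f : ℂ → ℂ} {r γ M : ℝ} (hγ : 1 ≤ γ)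
    (hf : DifferentiableOn ℂ f (ball 0 r))
    (hM : ∀ z ∈ ball (0 : ℂ) r, ‖γ * f z + z * deriv f z‖ ≤ M) {z : ℂ} (hz : z ∈ ball 0 r) :
    ‖f z‖ ≤ M / γ := by
  have hseg : ∀ t ∈ Icc (0 : ℝ) 1, (t : ℂ) * z ∈ ball (0 : ℂ) r := fun t ht => by
    rw [mem_ball_zero_iff, norm_mul, norm_real, Real.norm_of_nonneg ht.1]
    exact (mul_le_of_le_one_left (norm_nonneg z) ht.2).trans_lt (mem_ball_zero_iff.1 hz)
  have hψ : ∀ t ∈ Icc (0 : ℝ) 1, HasDerivAt (fun s : ℝ => ((s ^ γ : ℝ) : ℂ) * f (s * z))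
      (((t ^ (γ - 1) : ℝ) : ℂ) * (γ * f (t * z) + t * z * deriv f (t * z))) t := fun t ht => by
    have hft : HasDerivAt (fun w : ℂ => f (w * z)) (deriv f (t * z) * z) t :=
      (hf.differentiableAt (isOpen_ball.mem_nhds (hseg t ht))).hasDerivAt.comp (t : ℂ)
        (hasDerivAt_mul_const z)
    refine ((Real.hasDerivAt_rpow_const (Or.inr hγ)).ofReal_comp.mul
      hft.comp_ofReal).congr_deriv ?_
    rw [show t ^ γ = t ^ (γ - 1) * t by
      rw [← Real.rpow_add_one' ht.1 (by linarith), sub_add_cancel]]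
    push_cast
    ring
  have key := image_norm_le_of_norm_deriv_right_le_deriv_boundary
    (f := fun s : ℝ => ((s ^ γ : ℝ) : ℂ) * f (s * z))
    (B := fun t => M * t ^ γ / γ) (B' := fun t => M * t ^ (γ - 1))
    (fun t ht => (hψ t ht).continuousAt.continuousWithinAt)
    (fun t ht => (hψ t (Ico_subset_Icc_self ht)).hasDerivWithinAt)
    (by simp [Real.zero_rpow (by linarith : γ ≠ 0)])
    (fun t => (((Real.hasDerivAt_rpow_const (Or.inr hγ)).const_mul M).div_const γ).congr_deriv
      (by field_simp))
    (fun t ht => by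
      have ht0 : 0 ≤ t ^ (γ - 1) := Real.rpow_nonneg ht.1 _
      rw [norm_mul, norm_real, Real.norm_of_nonneg ht0, mul_comm M]
      exact mul_le_mul_of_nonneg_left (hM _ (hseg t (Ico_subset_Icc_self ht))) ht0)
    (right_mem_Icc.2 zero_le_one)
  simpa using key

theorem norm_deriv_le_of_norm_mul_deriv_add_le {β₁ β₂ R : ℝ} (hβ₂ : 0 < β₂) (hβ : β₂ ≤ β₁)
    {p : ℂ → ℂ} (hp : AnalyticOnNhd ℂ p (ball 0 1))
    (h : ∀ z ∈ ball (0 : ℂ) 1, ‖β₁ * z * deriv p z + β₂ * z ^ 2 * deriv (deriv p) z‖ ≤ R)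
    {z : ℂ} (hz : z ∈ ball 0 1) : ‖deriv p z‖ ≤ R / β₁ := by
  set γ := β₁ / β₂
  have hp' : DifferentiableOn ℂ (deriv p) (ball 0 1) := hp.deriv.differentiableOn
  have hp'' : DifferentiableOn ℂ (deriv (deriv p)) (ball 0 1) := hp.deriv.deriv.differentiableOn
  have hfactor (w : ℂ) : w * (β₂ * (γ * deriv p w + w * deriv (deriv p) w)) =
      β₁ * w * deriv p w + β₂ * w ^ 2 * deriv (deriv p) w := by
    have hγ : (γ : ℂ) * β₂ = β₁ := by exact_mod_cast div_mul_cancel₀ β₁ hβ₂.ne'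
    linear_combination w * deriv p w * hγ
  have hG : ∀ w ∈ ball (0 : ℂ) 1, ‖γ * deriv p w + w * deriv (deriv p) w‖ ≤ R / β₂ := by
    intro w hw
    have hschwarz := norm_le_div_of_forall_norm_mul_le (by fun_prop)
      (fun u hu => hfactor u ▸ h u hu) hw
    rw [norm_mul, norm_real, Real.norm_of_nonneg hβ₂.le, div_one] at hschwarz
    rwa [le_div_iff₀' hβ₂]
  refine (norm_le_div_of_norm_mul_add_mul_deriv_le ((one_le_div hβ₂).2 hβ) hp' hG hz).trans_eq ?_
  field_simp

theorem stmt7_general (β₁ β₂ : ℝ) (hβ₂ : 0 < β₂)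
    (hcond : nu0 * (β₁ + β₂ * nu1) ≥ Real.sinh 1)
    (p : ℂ → ℂ) (hp : AnalyticOnNhd ℂ p (ball 0 1)) (hp0 : p 0 = 1)
    (hsub : ∀ z ∈ ball (0 : ℂ) 1,
      ∃ w ∈ ball (0 : ℂ) 1, (1 + (β₁ : ℂ) * z * deriv p z + (β₂ : ℂ) * z ^ 2 * deriv (deriv p) z) = 1 + Complex.sin w) :
    ∀ z ∈ ball (0 : ℂ) 1, ∃ w ∈ ball (0 : ℂ) 1, p z = 1 + Complex.sin w := by
  have hβ := sinh_one_add_sin_one_mul_le_cos_one_mul hcond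
  have hβ₂₁ := lt_of_sinh_one_add_sin_one_mul_le hβ₂ hβ
  have hβ₁ := hβ₂.trans hβ₂₁
  have hsinh := sinh_one_lt_cos_one_mul hβ₂ hβ
  have hderiv (z : ℂ) (hz : z ∈ ball 0 1) : ‖deriv p z‖ ≤ Real.sinh 1 / β₁ := by
    refine norm_deriv_le_of_norm_mul_deriv_add_le hβ₂ hβ₂₁.le hp (fun w hw => ?_) hz
    obtain ⟨u, hu, he⟩ := hsub w hw
    rw [add_assoc, add_right_inj] at he
    rw [he]
    exact (norm_sin_le_sinh_norm u).trans (Real.sinh_le_sinh.2 (mem_ball_zero_iff.1 hu).le)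
  intro z hz
  have hlip := (convex_ball (0 : ℂ) 1).norm_image_sub_le_of_norm_deriv_le
    (fun w hw => (hp w hw).differentiableAt) hderiv (mem_ball_self one_pos) hz
  rw [hp0, sub_zero] at hlip
  have hlt : ‖p z - 1‖ < Real.cos 1 := hlip.trans_lt <| by
    calc Real.sinh 1 / β₁ * ‖z‖ ≤ Real.sinh 1 / β₁ :=
          mul_le_of_le_one_right (by positivity) (mem_ball_zero_iff.1 hz).le
      _ < Real.cos 1 := (div_lt_iff₀ hβ₁).2 hsinh
  obtain ⟨w, hw, hw_sin⟩ := exists_mem_ball_sin_eq (ζ := p z - 1)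
    (by nlinarith [Real.cos_one_le, norm_nonneg (p z - 1)])
  exact ⟨w, hw, by rw [hw_sin]; ring⟩

theorem stmt7 (β₁ β₂ : ℝ) (hβ₁ : 0 < β₁) (hβ₂ : 0 < β₂)
    (hcond : nu0 * (β₁ + β₂ * nu1) ≥ Real.sinh 1)
    (p : ℂ → ℂ) (hp : AnalyticOnNhd ℂ p (ball 0 1)) (hp0 : p 0 = 1)
    (hsub : ∀ z ∈ ball (0 : ℂ) 1,
      ∃ w ∈ ball (0 : ℂ) 1, (1 + (β₁ : ℂ) * z * deriv p z + (β₂ : ℂ) * z ^ 2 * deriv (deriv p) z) = 1 + Complex.sin w) :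
    ∀ z ∈ ball (0 : ℂ) 1, ∃ w ∈ ball (0 : ℂ) 1, p z = 1 + Complex.sin w :=
  stmt7_general β₁ β₂ hβ₂ hcond p hp hp0 hsub
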